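/- Plane-support claim (intermediate step in the phase-unwrapping theorem): Let h ∈ O_n and suppose the family (α_l,β_l), l = 1,…,n, satisfies the diversity condition. If there is a function c : ℤ² → ℂ such that ĥ_{(1,α_l,β_l)}(η,ζ) = c(η,ζ) for every l = 1,…,n and all integers (η,ζ), then h(m,j,k) = 0 whenever m ≠ 0; that is, h is supported on the plane where the first coordinate vanishes. -/

import Mathlib

open Complex MeasureTheory ProbabilityTheory BigOperators

noncomputable section

namespace Tomo3D

/-- `Z_m`: the integers in `[-(m-1)/2, (m-1)/2]` (for odd `m`). -/
def Zf (m : ℕ) : Finset ℤ :=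
  Finset.Icc (-(((m : ℤ) - 1) / 2)) (((m : ℤ) - 1) / 2)

/-- `Z_m²`. -/
def Zf2 (m : ℕ) : Finset (ℤ × ℤ) := Zf m ×ˢ Zf m

/-- The `p`-periodic Dirichlet kernel `D_p`. -/
def Dk (p : ℕ) (t : ℝ) : ℂ :=
  (p : ℂ)⁻¹ * ∑ l ∈ Zf p,
    Complex.exp (2 * (Real.pi : ℂ) * Complex.I * (l : ℂ) * (t : ℂ) / (p : ℂ))

/-- The class `O_n`: objects supported in `Z_n³`. -/
def IsObj (n : ℕ) (f : ℤ → ℤ → ℤ → ℂ) : Prop :=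
  ∀ i j k : ℤ, i ∉ Zf n ∨ j ∉ Zf n ∨ k ∉ Zf n → f i j k = 0

/-- Continuous interpolation `f̃` of an object. -/
def interp (n : ℕ) (f : ℤ → ℤ → ℤ → ℂ) (x y z : ℝ) : ℂ :=
  ∑ i ∈ Zf n, ∑ j ∈ Zf n, ∑ k ∈ Zf n,
    f i j k * Dk (2 * n - 1) (x - (i : ℝ)) * Dk (2 * n - 1) (y - (j : ℝ)) *
      Dk (2 * n - 1) (z - (k : ℝ))

/-- Directions `(1,α,β)`, `(α,1,β)`, `(α,β,1)`. -/
inductive Dir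
  | dx (α β : ℝ)
  | dy (α β : ℝ)
  | dz (α β : ℝ)

/-- Validity of a direction: the slopes satisfy `|α| < 1`, `|β| < 1`. -/
def Dir.valid : Dir → Prop
  | .dx α β => |α| < 1 ∧ |β| < 1
  | .dy α β => |α| < 1 ∧ |β| < 1
  | .dz α β => |α| < 1 ∧ |β| < 1

/-- The vector in `ℝ³` attached to a direction. -/
def Dir.toVec : Dir → ℝ × ℝ × ℝ
  | .dx α β => (1, α, β)
  | .dy α β => (α, 1, β)
  | .dz α β => (α, β, 1)

/-- Two directions are parallel if one is a real scalar multiple of the other. -/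
def Dir.Parallel (t t' : Dir) : Prop :=
  ∃ c : ℝ, t'.toVec = c • t.toVec ∨ t.toVec = c • t'.toVec

/-- Discrete projection of an object along a direction, regarded as a function on
`Z_{2n-1}²` extended by zero to `ℤ²`. -/
def proj (n : ℕ) (f : ℤ → ℤ → ℤ → ℂ) : Dir → ℤ × ℤ → ℂ
  | .dx α β => fun c =>
      if c ∈ Zf2 (2 * n - 1) then
        ∑ i ∈ Zf n, interp n f (i : ℝ) (α * (i : ℝ) + (c.1 : ℝ)) (β * (i : ℝ) + (c.2 : ℝ))
      else 0
  | .dy α β => fun c =>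
      if c ∈ Zf2 (2 * n - 1) then
        ∑ j ∈ Zf n, interp n f (α * (j : ℝ) + (c.1 : ℝ)) (j : ℝ) (β * (j : ℝ) + (c.2 : ℝ))
      else 0
  | .dz α β => fun c =>
      if c ∈ Zf2 (2 * n - 1) then
        ∑ k ∈ Zf n, interp n f (α * (k : ℝ) + (c.1 : ℝ)) (β * (k : ℝ) + (c.2 : ℝ)) (k : ℝ)
      else 0

/-- 3D discrete Fourier transform of an object (defined for all real frequencies). -/
def ft3 (n : ℕ) (f : ℤ → ℤ → ℤ → ℂ) (ξ η ζ : ℝ) : ℂ :=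
  ∑ i ∈ Zf n, ∑ j ∈ Zf n, ∑ k ∈ Zf n,
    f i j k *
      Complex.exp (-(2 * (Real.pi : ℂ) * Complex.I) *
        ((ξ : ℂ) * (i : ℂ) + (η : ℂ) * (j : ℂ) + (ζ : ℂ) * (k : ℂ)) /
          (((2 * n - 1 : ℕ) : ℂ)))

/-- 2D discrete Fourier transform of a projection (defined for all real frequencies). -/
def ft2 (n : ℕ) (g : ℤ × ℤ → ℂ) (η ζ : ℝ) : ℂ :=
  ∑ c ∈ Zf2 (2 * n - 1),
    g c *
      Complex.exp (-(2 * (Real.pi : ℂ) * Complex.I) *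
        ((η : ℂ) * (c.1 : ℂ) + (ζ : ℂ) * (c.2 : ℂ)) / (((2 * n - 1 : ℕ) : ℂ)))

/-- Diffraction pattern of `h : Z_p² → ℂ`. -/
def dpat (p : ℕ) (h : ℤ × ℤ → ℂ) (w : ℝ × ℝ) : ℝ :=
  ‖∑ m ∈ Zf2 p,
      h m * Complex.exp (-(2 * (Real.pi : ℂ) * Complex.I) *
        ((m.1 : ℂ) * (w.1 : ℂ) + (m.2 : ℂ) * (w.2 : ℂ)))‖ ^ 2

/-- `h₁` and `h₂` produce the same diffraction pattern (on `[-1/2,1/2]²`). -/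
def SameDP (p : ℕ) (h₁ h₂ : ℤ × ℤ → ℂ) : Prop :=
  ∀ w : ℝ × ℝ, w.1 ∈ Set.Icc (-(1 : ℝ) / 2) (1 / 2) →
    w.2 ∈ Set.Icc (-(1 : ℝ) / 2) (1 / 2) → dpat p h₁ w = dpat p h₂ w

/-- Autocorrelation of `h : ℤ² → ℂ`. -/
def autocorr (h : ℤ × ℤ → ℂ) (m : ℤ × ℤ) : ℂ :=
  ∑' m' : ℤ × ℤ, h (m' + m) * (starRingEnd ℂ) (h m')

/-- The random phase mask `μ(m) = exp(i φ(m))`. -/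
def mask {Ω : Type*} (φ : ℤ × ℤ → Ω → ℝ) (ω : Ω) (m : ℤ × ℤ) : ℂ :=
  Complex.exp (Complex.I * ((φ m ω : ℝ) : ℂ))

/-- The Mask Assumption: the phases `φ(m)`, `m ∈ Z_p²`, are independent real random
variables whose laws have no atoms. -/
def MaskAssumption {Ω : Type*} [MeasurableSpace Ω] (P : Measure Ω) (p : ℕ)
    (φ : ℤ × ℤ → Ω → ℝ) : Prop :=
  (∀ m, Measurable (φ m)) ∧
  iIndepFun (m := fun _ : {m : ℤ × ℤ // m ∈ Zf2 p} => (inferInstance : MeasurableSpace ℝ))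
    (fun m : {m : ℤ × ℤ // m ∈ Zf2 p} => φ m.1) P ∧
  ∀ m ∈ Zf2 p, ∀ r : ℝ, P {ω | φ m ω = r} = 0

/-- The uniform random phase mask: independent phases, uniformly distributed on `[0,2π)`. -/
def UniformMask {Ω : Type*} [MeasurableSpace Ω] (P : Measure Ω) (p : ℕ)
    (φ : ℤ × ℤ → Ω → ℝ) : Prop :=
  (∀ m, Measurable (φ m)) ∧
  iIndepFun (m := fun _ : {m : ℤ × ℤ // m ∈ Zf2 p} => (inferInstance : MeasurableSpace ℝ))
    (fun m : {m : ℤ × ℤ // m ∈ Zf2 p} => φ m.1) P ∧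
  ∀ m ∈ Zf2 p,
    P.map (φ m) = (ENNReal.ofReal (2 * Real.pi))⁻¹ • volume.restrict (Set.Ico 0 (2 * Real.pi))

/-- The representative of `x` modulo `p` lying in `Z_p` (for odd `p`). -/
def zmodRep (p : ℕ) (x : ℤ) : ℤ := (x + ((p : ℤ) - 1) / 2) % (p : ℤ) - ((p : ℤ) - 1) / 2

/-- `p`-periodic extension to `ℤ²` of a function on `Z_p²`. -/
def perExt (p : ℕ) (h : ℤ × ℤ → ℂ) (m : ℤ × ℤ) : ℂ := h (zmodRep p m.1, zmodRep p m.2)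

/-- A function on `ℤ²` is supported on a line. -/
def SuppOnLine (h : ℤ × ℤ → ℂ) : Prop :=
  ∃ a b : ℝ × ℝ, ∀ m : ℤ × ℤ, h m ≠ 0 →
    ∃ s : ℝ, ((m.1 : ℝ), (m.2 : ℝ)) = (a.1 + s * b.1, a.2 + s * b.2)

/-- The diversity condition for a family of slope pairs. -/
def Diversity (n : ℕ) (α β : Fin n → ℝ) : Prop :=
  (∀ l, |α l| < 1 ∧ |β l| < 1) ∧
  ∀ ξη : ℤ × ℤ, ξη ∈ Zf2 (2 * n - 1) → ξη ≠ (0, 0) →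
    ∀ l l' : Fin n, l ≠ l' →
      ¬ ∃ z : ℤ,
        α l * (ξη.1 : ℝ) + β l * (ξη.2 : ℝ) - (α l' * (ξη.1 : ℝ) + β l' * (ξη.2 : ℝ))
          = (z : ℝ) * (((2 * n - 1 : ℕ) : ℝ))

/-- The 3D Itoh condition for `κ`: variation less than `π/κ` between adjacent grid points. -/
def Itoh (n : ℕ) (κ : ℝ) (f : ℤ → ℤ → ℤ → ℂ) : Prop :=
  ∀ i j k i' j' k' : ℤ,
    i ∈ Zf n → j ∈ Zf n → k ∈ Zf n → i' ∈ Zf n → j' ∈ Zf n → k' ∈ Zf n →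
    ((|i - i'| = 1 ∧ j = j' ∧ k = k') ∨ (i = i' ∧ |j - j'| = 1 ∧ k = k') ∨
      (i = i' ∧ j = j' ∧ |k - k'| = 1)) →
    ‖f i j k - f i' j' k'‖ < Real.pi / κ

/-- The common set `L_{t,t'}(f)` for directions `t = (α,β,1)` and `t' = (α',β',1)`. -/
def commonSet (n : ℕ) (f : ℤ → ℤ → ℤ → ℂ) (α β α' β' : ℝ) : Set ((ℝ × ℝ) × (ℝ × ℝ)) :=
  {kk | ft2 n (proj n f (Dir.dz α β)) kk.1.1 kk.1.2
      = ft2 n (proj n f (Dir.dz α' β')) kk.2.1 kk.2.2}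

/-- `k` has a slope (its first component is nonzero) which is not a fraction over `Z_p`. -/
def BadSlope (p : ℕ) (k : ℝ × ℝ) : Prop :=
  k.1 ≠ 0 ∧ ∀ a b : ℤ, a ∈ Zf p → b ∈ Zf p → b ≠ 0 → k.2 / k.1 ≠ (a : ℝ) / (b : ℝ)

/-- Sector condition: every nonzero value of `h` has phase angle in `[a, b]` (mod 2π). -/
def Sector (a b : ℝ) (h : ℤ × ℤ → ℂ) : Prop :=
  ∀ m : ℤ × ℤ, h m ≠ 0 →
    ∃ θ ∈ Set.Icc a b, h m = ((‖h m‖ : ℝ) : ℂ) * Complex.exp (Complex.I * (θ : ℂ))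

open scoped Classical in
/-- Number of points of `Z_p²` where `h` does not vanish. -/
def nnz (p : ℕ) (h : ℤ × ℤ → ℂ) : ℕ := ((Zf2 p).filter fun m => h m ≠ 0).card


/-!
Along `(1, α, β)` and at integer frequencies `(η, ζ) ∈ Z_p²`, the DFT of the projection is
`∑ᵢ Hᵢ(η, ζ) wⁱ` with `w = exp (2πi (αη + βζ) / p)` and `Hᵢ` the 2D DFT of the slice `h(i, ·, ·)`
(Fourier slice theorem). If the `n` projections share their DFT, then at a nonzero frequency the
Laurent polynomial `∑ᵢ Hᵢ wⁱ - c` of width `n` has the `n` roots given by the diversity condition,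
so `Hᵢ(η, ζ) = 0` for `i ≠ 0`. For such `i` the slice, zero padded to `Z_p²`, has its DFT supported
at the origin, hence is constant, hence zero because `Z_n ⊊ Z_p`.
-/

open Real

theorem mem_Zf {m : ℕ} {i : ℤ} : i ∈ Zf m ↔ -(((m : ℤ) - 1) / 2) ≤ i ∧ i ≤ ((m : ℤ) - 1) / 2 :=
  Finset.mem_Icc

theorem card_Zf_of_odd {N : ℕ} (hN : Odd N) : (Zf N).card = N := by
  obtain ⟨m, rfl⟩ := hN
  rw [Zf, Int.card_Icc]
  omega

theorem eq_of_mem_Zf_of_dvd_sub {N : ℕ} {a b : ℤ} (ha : a ∈ Zf N) (hb : b ∈ Zf N)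
    (hdvd : (N : ℤ) ∣ a - b) : a = b := by
  rw [mem_Zf] at ha hb
  have := Int.eq_zero_of_abs_lt_dvd hdvd (by rw [abs_lt]; omega)
  omega

theorem one_lt_of_mem_Zf_of_ne_zero {n : ℕ} {i : ℤ} (hi : i ∈ Zf n) (hi0 : i ≠ 0) : 1 < n := by
  rw [mem_Zf] at hi
  omega

theorem odd_two_mul_sub_one {n : ℕ} (hn : 0 < n) : Odd (2 * n - 1) := ⟨n - 1, by omega⟩

theorem Zf_subset_Zf_two_mul_sub_one (n : ℕ) : Zf n ⊆ Zf (2 * n - 1) := by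
  apply Finset.Icc_subset_Icc <;> omega

theorem Zf_ssubset_Zf_two_mul_sub_one {n : ℕ} (hn : 1 < n) : Zf n ⊂ Zf (2 * n - 1) := by
  refine (Finset.ssubset_iff_of_subset (Zf_subset_Zf_two_mul_sub_one n)).2 ⟨n - 1, ?_, ?_⟩ <;>
  · rw [mem_Zf]
    omega

def ep (N : ℕ) (x : ℂ) : ℂ := Complex.exp (2 * π * I * x / N)

theorem ep_add (N : ℕ) (x y : ℂ) : ep N (x + y) = ep N x * ep N y := by
  rw [ep, ep, ep, ← Complex.exp_add]
  ring_nf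

theorem ep_zero (N : ℕ) : ep N 0 = 1 := by
  simp [ep]

theorem ep_intCast_mul (N : ℕ) (l : ℤ) (x : ℂ) : ep N (l * x) = ep N x ^ l := by
  rw [ep, ep, ← Complex.exp_int_mul]
  ring_nf

theorem ep_eq_ep_iff {N : ℕ} (hN : N ≠ 0) {x y : ℂ} :
    ep N x = ep N y ↔ ∃ z : ℤ, x = y + z * N := by
  have hN' : (N : ℂ) ≠ 0 := by exact_mod_cast hN
  rw [ep, ep, Complex.exp_eq_exp_iff_exists_int]
  refine exists_congr fun z => ⟨fun h => ?_, fun h => ?_⟩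
  · field_simp at h
    linear_combination h
  · rw [h]
    field_simp

theorem ep_intCast_eq_one_iff {N : ℕ} (hN : N ≠ 0) (x : ℤ) : ep N x = 1 ↔ (N : ℤ) ∣ x := by
  rw [← ep_zero N, ep_eq_ep_iff hN, dvd_iff_exists_eq_mul_left]
  refine exists_congr fun z => ?_
  rw [zero_add]
  exact_mod_cast Iff.rfl

theorem ep_intCast_pow_self {N : ℕ} (hN : N ≠ 0) (x : ℤ) : ep N x ^ N = 1 := by
  rw [← zpow_natCast, ← ep_intCast_mul]
  exact_mod_cast (ep_intCast_eq_one_iff hN _).2 (dvd_mul_right _ _)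

/-- `Zf N` is `Finset.range N` shifted by `-(N - 1) / 2`, so this is a geometric sum. -/
theorem sum_Zf_zpow_eq_zero {K : Type*} [Field K] {N : ℕ} (hN : Odd N) {ω : K} (hω0 : ω ≠ 0) (hω1 : ω ≠ 1)
    (hωN : ω ^ N = 1) : ∑ l ∈ Zf N, ω ^ l = 0 := by
  set M : ℤ := ((N : ℤ) - 1) / 2
  have hshift : (∑ l ∈ Zf N, ω ^ l) * ω ^ M = ∑ a ∈ Finset.range N, ω ^ a := by
    obtain ⟨m, rfl⟩ := hN
    rw [Finset.sum_mul]
    refine Finset.sum_nbij' (fun l => (l + M).toNat) (fun a => (a : ℤ) - M) ?_ ?_ ?_ ?_ ?_ <;>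
      intro l hl <;> simp only [Finset.mem_range, mem_Zf] at hl ⊢
    · omega
    · omega
    · omega
    · omega
    · rw [← zpow_natCast, Int.toNat_of_nonneg (by omega), zpow_add₀ hω0]
  have : (∑ l ∈ Zf N, ω ^ l) * ω ^ M = 0 := by
    rw [hshift, geom_sum_eq hω1, hωN, sub_self, zero_div]
  exact (mul_eq_zero.1 this).resolve_right (zpow_ne_zero _ hω0)

theorem sum_Zf_ep_mul_sub {N : ℕ} (hN : Odd N) {a b : ℤ} (ha : a ∈ Zf N) (hb : b ∈ Zf N) :
    ∑ l ∈ Zf N, ep N (l * (a - b)) = if a = b then (N : ℂ) else 0 := by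
  have hN0 : N ≠ 0 := hN.pos.ne'
  simp only [ep_intCast_mul]
  split_ifs with hab
  · simp [hab, ep_zero, card_Zf_of_odd hN]
  · have hω1 : ep N ((a - b : ℤ) : ℂ) ≠ 1 := fun h =>
      hab (eq_of_mem_Zf_of_dvd_sub ha hb ((ep_intCast_eq_one_iff hN0 _).1 h))
    push_cast at hω1
    refine sum_Zf_zpow_eq_zero hN (Complex.exp_ne_zero _) hω1 ?_
    exact_mod_cast ep_intCast_pow_self hN0 (a - b)

theorem Dk_eq_sum_ep (N : ℕ) (t : ℝ) : Dk N t = (N : ℂ)⁻¹ * ∑ l ∈ Zf N, ep N (l * t) := by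
  simp only [Dk, ep, mul_assoc]

theorem Dk_intCast_sub {N : ℕ} (hN : Odd N) {a b : ℤ} (ha : a ∈ Zf N) (hb : b ∈ Zf N) :
    Dk N (a - b) = if a = b then 1 else 0 := by
  have hN' : (N : ℂ) ≠ 0 := by exact_mod_cast hN.pos.ne'
  rw [Dk_eq_sum_ep]
  push_cast
  rw [sum_Zf_ep_mul_sub hN ha hb]
  split_ifs <;> simp [hN']

theorem sum_Dk_add_mul_ep {N : ℕ} (hN : Odd N) {η : ℤ} (hη : η ∈ Zf N) (s : ℝ) :
    ∑ c ∈ Zf N, Dk N (s + c) * ep N (-(η * c)) = ep N (η * s) := by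
  have hN' : (N : ℂ) ≠ 0 := by exact_mod_cast hN.pos.ne'
  calc ∑ c ∈ Zf N, Dk N (s + c) * ep N (-(η * c))
      = ∑ l ∈ Zf N, (N : ℂ)⁻¹ * ep N (l * s) * ∑ c ∈ Zf N, ep N (c * (l - η)) := by
        simp only [Dk_eq_sum_ep, Finset.mul_sum, Finset.sum_mul]
        rw [Finset.sum_comm]
        refine Finset.sum_congr rfl fun l _ => Finset.sum_congr rfl fun c _ => ?_
        rw [mul_assoc, mul_assoc, ← ep_add, ← ep_add]
        congr 2
        push_cast
        ring
    _ = ∑ l ∈ Zf N, if l = η then ep N (η * s) else 0 := by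
        refine Finset.sum_congr rfl fun l hl => ?_
        rw [sum_Zf_ep_mul_sub hN hl hη]
        split_ifs with hlη
        · rw [hlη]
          field_simp
        · rw [mul_zero]
    _ = ep N (η * s) := by rw [Finset.sum_ite_eq', if_pos hη]

theorem interp_intCast {n : ℕ} (hn : 0 < n) (h : ℤ → ℤ → ℤ → ℂ) {i : ℤ} (hi : i ∈ Zf n)
    (y z : ℝ) :
    interp n h i y z =
      ∑ j ∈ Zf n, ∑ k ∈ Zf n,
        h i j k * Dk (2 * n - 1) (y - j) * Dk (2 * n - 1) (z - k) := by
  have hsub := Zf_subset_Zf_two_mul_sub_one n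
  rw [interp, Finset.sum_eq_single_of_mem i hi]
  · refine Finset.sum_congr rfl fun j _ => Finset.sum_congr rfl fun k _ => ?_
    rw [Dk_intCast_sub (odd_two_mul_sub_one hn) (hsub hi) (hsub hi), if_pos rfl, mul_one]
  · intro i' hi' hne
    simp [Dk_intCast_sub (odd_two_mul_sub_one hn) (hsub hi) (hsub hi'), Ne.symm hne]

def dft2 (N : ℕ) (s : Finset ℤ) (g : ℤ → ℤ → ℂ) (η ζ : ℤ) : ℂ :=
  ∑ j ∈ s, ∑ k ∈ s, g j k * ep N (-(η * j + ζ * k))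

theorem ft2_intCast (n : ℕ) (g : ℤ × ℤ → ℂ) (η ζ : ℤ) :
    ft2 n g η ζ =
      ∑ c ∈ Zf2 (2 * n - 1), g c * (ep (2 * n - 1) (-(η * c.1)) * ep (2 * n - 1) (-(ζ * c.2))) := by
  refine Finset.sum_congr rfl fun c _ => ?_
  rw [← ep_add, ep]
  push_cast
  ring_nf

theorem proj_dx_of_mem {n : ℕ} (hn : 0 < n) (h : ℤ → ℤ → ℤ → ℂ) (α β : ℝ) {c : ℤ × ℤ}
    (hc : c ∈ Zf2 (2 * n - 1)) :
    proj n h (.dx α β) c =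
      ∑ i ∈ Zf n, ∑ j ∈ Zf n, ∑ k ∈ Zf n,
        h i j k * Dk (2 * n - 1) (α * i - j + c.1) * Dk (2 * n - 1) (β * i - k + c.2) := by
  simp only [proj, if_pos hc]
  refine Finset.sum_congr rfl fun i hi => ?_
  simp only [interp_intCast hn h hi, add_sub_right_comm]

/-- Discrete Fourier slice theorem. -/
theorem ft2_proj_dx {n : ℕ} (hn : 0 < n) (h : ℤ → ℤ → ℤ → ℂ) (α β : ℝ) {η ζ : ℤ}
    (hη : η ∈ Zf (2 * n - 1)) (hζ : ζ ∈ Zf (2 * n - 1)) :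
    ft2 n (proj n h (.dx α β)) η ζ =
      ∑ i ∈ Zf n, dft2 (2 * n - 1) (Zf n) (h i) η ζ * ep (2 * n - 1) (i * (α * η + β * ζ : ℝ)) := by
  have hN := odd_two_mul_sub_one hn
  set N := 2 * n - 1
  calc ft2 n (proj n h (.dx α β)) η ζ
      = ∑ c ∈ Zf2 N, ∑ i ∈ Zf n, ∑ j ∈ Zf n, ∑ k ∈ Zf n, h i j k *
          ((Dk N (α * i - j + c.1) * ep N (-(η * c.1))) *
            (Dk N (β * i - k + c.2) * ep N (-(ζ * c.2)))) := by
        rw [ft2_intCast]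
        refine Finset.sum_congr rfl fun c hc => ?_
        simp only [proj_dx_of_mem hn h α β hc, Finset.sum_mul]
        refine Finset.sum_congr rfl fun i _ => Finset.sum_congr rfl fun j _ =>
          Finset.sum_congr rfl fun k _ => by ring
    _ = ∑ i ∈ Zf n, ∑ j ∈ Zf n, ∑ k ∈ Zf n, ∑ c ∈ Zf2 N, h i j k *
          ((Dk N (α * i - j + c.1) * ep N (-(η * c.1))) *
            (Dk N (β * i - k + c.2) * ep N (-(ζ * c.2)))) := by
        rw [Finset.sum_comm]
        refine Finset.sum_congr rfl fun i _ => ?_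
        rw [Finset.sum_comm]
        exact Finset.sum_congr rfl fun j _ => Finset.sum_comm
    _ = ∑ i ∈ Zf n, ∑ j ∈ Zf n, ∑ k ∈ Zf n,
          h i j k * (ep N (η * (α * i - j : ℝ)) * ep N (ζ * (β * i - k : ℝ))) := by
        refine Finset.sum_congr rfl fun i _ => Finset.sum_congr rfl fun j _ =>
          Finset.sum_congr rfl fun k _ => ?_
        rw [← sum_Dk_add_mul_ep hN hη, ← sum_Dk_add_mul_ep hN hζ, Finset.sum_mul_sum,
          ← Finset.sum_product', ← Finset.mul_sum]
        rfl
    _ = _ := by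
        simp only [dft2, Finset.sum_mul]
        refine Finset.sum_congr rfl fun i _ => Finset.sum_congr rfl fun j _ =>
          Finset.sum_congr rfl fun k _ => ?_
        rw [mul_assoc, ← ep_add, ← ep_add]
        push_cast
        ring_nf

/-- Multiplied by `x ^ (-a)`, the sum is a polynomial of degree `< m` with `m` roots. -/
theorem eq_zero_of_sum_mul_zpow_eq_zero {K : Type*} [Field K] {m : ℕ} {s : Finset ℤ} {a : ℤ}
    (hs : s ⊆ Finset.Ico a (a + m)) {x : Fin m → K} (hx : Function.Injective x)
    (hx0 : ∀ l, x l ≠ 0) {c : ℤ → K} (hc : ∀ l, ∑ i ∈ s, c i * x l ^ i = 0) :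
    ∀ i ∈ s, c i = 0 := by
  intro i₀ hi₀
  have hmem : ∀ i ∈ s, a ≤ i ∧ i < a + m := fun i hi => Finset.mem_Ico.1 (hs hi)
  set Q : Polynomial K := ∑ i ∈ s, Polynomial.monomial (i - a).toNat (c i)
  have hdeg : Q.natDegree < m := by
    have : Q.natDegree ≤ m - 1 := Polynomial.natDegree_sum_le_of_forall_le _ _ fun i hi =>
      (Polynomial.natDegree_monomial_le _).trans (by have := hmem i hi; omega)
    have := hmem i₀ hi₀
    omega
  have heval : ∀ l, Q.eval (x l) = 0 := fun l => by
    have : Q.eval (x l) * x l ^ a = ∑ i ∈ s, c i * x l ^ i := by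
      simp only [Q, Polynomial.eval_finsetSum, Polynomial.eval_monomial, Finset.sum_mul]
      refine Finset.sum_congr rfl fun i hi => ?_
      rw [mul_assoc, ← zpow_natCast, Int.toNat_of_nonneg (by linarith [(hmem i hi).1]),
        ← zpow_add₀ (hx0 l), sub_add_cancel]
    exact (mul_eq_zero.1 (this.trans (hc l))).resolve_right (zpow_ne_zero _ (hx0 l))
  have hQ : Q = 0 := Polynomial.eq_zero_of_natDegree_lt_card_of_eval_eq_zero Q hx heval
    (by rwa [Fintype.card_fin])
  have : Q.coeff (i₀ - a).toNat = c i₀ := by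
    simp only [Q, Polynomial.finsetSum_coeff, Polynomial.coeff_monomial]
    rw [Finset.sum_eq_single_of_mem i₀ hi₀, if_pos rfl]
    intro j hj hji
    have := hmem i₀ hi₀
    have := hmem j hj
    rw [if_neg (by omega)]
  rw [← this, hQ, Polynomial.coeff_zero]

theorem Diversity.injective_ep {n : ℕ} {α β : Fin n → ℝ} (hdiv : Diversity n α β) {η ζ : ℤ}
    (hmem : (η, ζ) ∈ Zf2 (2 * n - 1)) (hne : (η, ζ) ≠ (0, 0)) :
    Function.Injective fun l => ep (2 * n - 1) (α l * η + β l * ζ : ℝ) := by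
  intro l l' hll'
  by_contra hne'
  have hN : 2 * n - 1 ≠ 0 := by have := l.pos; omega
  obtain ⟨z, hz⟩ := (ep_eq_ep_iff hN).1 hll'
  have hz' : α l * η + β l * ζ = α l' * η + β l' * ζ + z * ((2 * n - 1 : ℕ) : ℝ) := by
    exact_mod_cast hz
  exact hdiv.2 _ hmem hne l l' hne' ⟨z, by linarith⟩

theorem dft2_slice_eq_zero {n : ℕ} {h : ℤ → ℤ → ℤ → ℂ} {α β : Fin n → ℝ}
    (hdiv : Diversity n α β) {c : ℤ × ℤ → ℂ}
    (hc : ∀ l : Fin n, ∀ η ζ : ℤ,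
      ft2 n (proj n h (Dir.dx (α l) (β l))) (η : ℝ) (ζ : ℝ) = c (η, ζ))
    {η ζ : ℤ} (hmem : (η, ζ) ∈ Zf2 (2 * n - 1)) (hne : (η, ζ) ≠ (0, 0))
    {i : ℤ} (hi : i ∈ Zf n) (hi0 : i ≠ 0) :
    dft2 (2 * n - 1) (Zf n) (h i) η ζ = 0 := by
  have hn : 0 < n := by have := one_lt_of_mem_Zf_of_ne_zero hi hi0; omega
  obtain ⟨hη, hζ⟩ := Finset.mem_product.1 hmem
  have h0 : (0 : ℤ) ∈ Zf n := by rw [mem_Zf]; omega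
  have hwindow : Zf n ⊆ Finset.Ico (-(((n : ℤ) - 1) / 2)) (-(((n : ℤ) - 1) / 2) + n) := by
    intro j hj
    rw [mem_Zf] at hj
    rw [Finset.mem_Ico]
    omega
  have := eq_zero_of_sum_mul_zpow_eq_zero hwindow (hdiv.injective_ep hmem hne)
    (fun l => Complex.exp_ne_zero _)
    (c := fun j => dft2 (2 * n - 1) (Zf n) (h j) η ζ - if j = 0 then c (η, ζ) else 0) ?_ i hi
  · simpa [hi0] using this
  · intro l
    simp only [sub_mul, Finset.sum_sub_distrib, ite_mul, zero_mul, Finset.sum_ite_eq',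
      if_pos h0, zpow_zero, mul_one]
    rw [← hc l η ζ, ft2_proj_dx hn h _ _ hη hζ]
    simp only [ep_intCast_mul, sub_self]

theorem sum_dft2_mul_ep {N : ℕ} (hN : Odd N) {s : Finset ℤ} (hs : s ⊆ Zf N) (g : ℤ → ℤ → ℂ)
    {j₀ k₀ : ℤ} (hj₀ : j₀ ∈ Zf N) (hk₀ : k₀ ∈ Zf N) :
    ∑ η ∈ Zf N, ∑ ζ ∈ Zf N, dft2 N s g η ζ * ep N (η * j₀ + ζ * k₀) =
      (N : ℂ) ^ 2 * if j₀ ∈ s ∧ k₀ ∈ s then g j₀ k₀ else 0 := by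
  calc ∑ η ∈ Zf N, ∑ ζ ∈ Zf N, dft2 N s g η ζ * ep N (η * j₀ + ζ * k₀)
      = ∑ η ∈ Zf N, ∑ ζ ∈ Zf N, ∑ j ∈ s, ∑ k ∈ s,
          g j k * (ep N (η * (j₀ - j)) * ep N (ζ * (k₀ - k))) := by
        simp only [dft2, Finset.sum_mul]
        refine Finset.sum_congr rfl fun η _ => Finset.sum_congr rfl fun ζ _ =>
          Finset.sum_congr rfl fun j _ => Finset.sum_congr rfl fun k _ => ?_
        rw [mul_assoc, ← ep_add, ← ep_add]
        ring_nf
    _ = ∑ j ∈ s, ∑ k ∈ s, g j k *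
          ((∑ η ∈ Zf N, ep N (η * (j₀ - j))) * ∑ ζ ∈ Zf N, ep N (ζ * (k₀ - k))) := by
        rw [← Finset.sum_product', Finset.sum_comm]
        refine Finset.sum_congr rfl fun j _ => ?_
        rw [Finset.sum_comm]
        refine Finset.sum_congr rfl fun k _ => ?_
        rw [Finset.sum_product, Finset.sum_mul_sum, Finset.mul_sum]
        exact Finset.sum_congr rfl fun η _ => (Finset.mul_sum _ _ _).symm
    _ = ∑ j ∈ s, ∑ k ∈ s,
          if j₀ = j then (if k₀ = k then (N : ℂ) ^ 2 * g j k else 0) else 0 :=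
        Finset.sum_congr rfl fun j hj => Finset.sum_congr rfl fun k hk => by
          rw [sum_Zf_ep_mul_sub hN hj₀ (hs hj), sum_Zf_ep_mul_sub hN hk₀ (hs hk)]
          split_ifs <;> ring
    _ = _ := by
        simp only [Finset.sum_ite_irrel, Finset.sum_const_zero, Finset.sum_ite_eq, ite_and]
        split_ifs <;> ring

theorem eq_zero_of_dft2_eq_zero {N : ℕ} (hN : Odd N) {s : Finset ℤ} (hs : s ⊂ Zf N)
    {g : ℤ → ℤ → ℂ} (hg : ∀ η ∈ Zf N, ∀ ζ ∈ Zf N, (η, ζ) ≠ (0, 0) → dft2 N s g η ζ = 0)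
    {j k : ℤ} (hj : j ∈ s) (hk : k ∈ s) : g j k = 0 := by
  have h0 : (0 : ℤ) ∈ Zf N := by
    obtain ⟨m, rfl⟩ := hN
    rw [mem_Zf]
    omega
  have hconst : ∀ j₀ ∈ Zf N, ∀ k₀ ∈ Zf N,
      (N : ℂ) ^ 2 * (if j₀ ∈ s ∧ k₀ ∈ s then g j₀ k₀ else 0) = dft2 N s g 0 0 := by
    intro j₀ hj₀ k₀ hk₀
    rw [← sum_dft2_mul_ep hN hs.subset g hj₀ hk₀, ← Finset.sum_product',
      Finset.sum_eq_single_of_mem (0, 0) (Finset.mem_product.2 ⟨h0, h0⟩)]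
    · simp [ep_zero]
    · rintro ⟨η, ζ⟩ hηζ hne
      rw [hg η (Finset.mem_product.1 hηζ).1 ζ (Finset.mem_product.1 hηζ).2 hne, zero_mul]
  obtain ⟨j₁, hj₁, hj₁s⟩ := Finset.exists_of_ssubset hs
  have hzero := hconst j₁ hj₁ j₁ hj₁
  rw [if_neg (fun h => hj₁s h.1), mul_zero] at hzero
  have hjk := hconst j (hs.subset hj) k (hs.subset hk)
  rw [if_pos ⟨hj, hk⟩, ← hzero] at hjk
  have hN' : (N : ℂ) ^ 2 ≠ 0 := pow_ne_zero _ (by exact_mod_cast hN.pos.ne')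
  exact (mul_eq_zero.1 hjk).resolve_left hN'

theorem plane_support_general
    (n : ℕ)
    (h : ℤ → ℤ → ℤ → ℂ) (hobj : IsObj n h)
    (α β : Fin n → ℝ) (hdiv : Diversity n α β)
    (c : ℤ × ℤ → ℂ)
    (hc : ∀ l : Fin n, ∀ η ζ : ℤ,
      ft2 n (proj n h (Dir.dx (α l) (β l))) (η : ℝ) (ζ : ℝ) = c (η, ζ)) :
    ∀ m j k : ℤ, m ≠ 0 → h m j k = 0 := by
  intro m j k hm
  by_cases hmem : m ∈ Zf n ∧ j ∈ Zf n ∧ k ∈ Zf n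
  · obtain ⟨hmZ, hjZ, hkZ⟩ := hmem
    have hn := one_lt_of_mem_Zf_of_ne_zero hmZ hm
    refine eq_zero_of_dft2_eq_zero (odd_two_mul_sub_one (by omega))
      (Zf_ssubset_Zf_two_mul_sub_one hn) (fun η hη ζ hζ hne => ?_) hjZ hkZ
    exact dft2_slice_eq_zero hdiv hc (Finset.mem_product.2 ⟨hη, hζ⟩) hne hmZ hm
  · exact hobj m j k (by tauto)

/-- Plane-support claim. -/
theorem plane_support
    (n : ℕ) (hn : Odd n) (hn3 : 3 ≤ n)
    (h : ℤ → ℤ → ℤ → ℂ) (hobj : IsObj n h)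
    (α β : Fin n → ℝ) (hdiv : Diversity n α β)
    (c : ℤ × ℤ → ℂ)
    (hc : ∀ l : Fin n, ∀ η ζ : ℤ,
      ft2 n (proj n h (Dir.dx (α l) (β l))) (η : ℝ) (ζ : ℝ) = c (η, ζ)) :
    ∀ m j k : ℤ, m ≠ 0 → h m j k = 0 :=
  plane_support_general n h hobj α β hdiv c hc

end Tomo3D
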